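/- Let $(\tilde{u}_i)_{i=1}^n$ be exchangeable real random variables, $\sigma > 0$, $\alpha \in (0,1)$, and let $\tilde{q}_{n,\alpha}$ be the empirical $\alpha$-quantile of $\tilde{u}_1, \dots, \tilde{u}_n$ (i.e., $\tilde{q}_{n,\alpha} = \tilde{F}_n^{\dagger}(\alpha)$ with $\tilde{F}_n$ the empirical distribution function and $F^\dagger(t) = \inf\{u : F(u) \ge t\}$). Suppose there is a continuous, strictly increasing distribution function $F$ with unique $\alpha$-quantile $q_\alpha$ such that for every $\varepsilon>0$, (a) $\mathbb{P}(\tilde{u}_1 / \sigma \le q_\alpha + \varepsilon) \to F(q_\alpha + \varepsilon)$ and $\mathbb{P}(\tilde{u}_1/\sigma \le q_\alpha - \varepsilon) \to F(q_\alpha - \varepsilon)$, and (b) $\mathrm{Cov}(\mathbf{1}\{\tilde{u}_1/\sigma > q_\alpha + \varepsilon\}, \mathbf{1}\{\tilde{u}_2/\sigma > q_\alpha + \varepsilon\}) \to 0$ and $\mathrm{Cov}(\mathbf{1}\{\tilde{u}_1/\sigma \le q_\alpha - \varepsilon\}, \mathbf{1}\{\tilde{u}_2/\sigma \le q_\alpha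 - \varepsilon\}) \to 0$. Then $\tilde{q}_{n,\alpha}/\sigma \to q_\alpha$ in probability as $n \to \infty$. -/

import Mathlib

open MeasureTheory ProbabilityTheory Filter Topology
open scoped Classical

/-- Empirical distribution function of the first `n` of the variables `u' n i`. -/
noncomputable def empCdf (n : ℕ) (x : ℕ → ℝ) (t : ℝ) : ℝ :=
  (∑ i ∈ Finset.range n, if x i ≤ t then (1 : ℝ) else 0) / n

/-- Empirical `α`-quantile `F̃ₙ†(α) = inf{u : F̃ₙ(u) ≥ α}`. -/
noncomputable def empQuantile (n : ℕ) (x : ℕ → ℝ) (α : ℝ) : ℝ :=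
  sInf {u : ℝ | α ≤ empCdf n x u}

/-!
If `empQuantile / σ` exceeds `qα + ε`, the empirical cdf at `(qα + ε) σ` is below `α`, whereas
its mean `P(ũ₁/σ ≤ qα + ε)` tends to `F (qα + ε) > α`; symmetrically below `qα - ε`. So it
suffices that the empirical cdf at a fixed threshold concentrates around its mean. By
exchangeability the indicators share one variance `v` and every pair one covariance `c`, so their
average has variance `v / n + (n - 1) / n · c → 0`, and Chebyshev's inequality concludes.
-/

namespace empCdf

variable {n : ℕ} {x : ℕ → ℝ}

lemma monotone : Monotone (empCdf n x) := fun s t hst ↦ by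
  unfold empCdf
  gcongr with i
  split_ifs with hs ht
  exacts [le_rfl, absurd (hs.trans hst) ht, zero_le_one, le_rfl]

lemma eq_zero_of_lt {t : ℝ} (h : ∀ i < n, t < x i) : empCdf n x t = 0 := by
  unfold empCdf
  rw [Finset.sum_eq_zero fun i hi ↦ if_neg (h i (Finset.mem_range.1 hi)).not_ge, zero_div]

lemma eq_one_of_le (hn : n ≠ 0) {t : ℝ} (h : ∀ i < n, x i ≤ t) : empCdf n x t = 1 := by
  unfold empCdf
  rw [Finset.sum_congr rfl fun i hi ↦ if_pos (h i (Finset.mem_range.1 hi))]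
  simp [hn]

end empCdf

lemma empCdf_lt_of_lt_empQuantile {n : ℕ} {x : ℕ → ℝ} {α t : ℝ} (hn : n ≠ 0) (hα : 0 < α)
    (ht : t < empQuantile n x α) : empCdf n x t < α := by
  by_contra! hle
  have hne : (Finset.range n).Nonempty := Finset.nonempty_range_iff.2 hn
  have hbdd : BddBelow {u | α ≤ empCdf n x u} := by
    refine ⟨(Finset.range n).inf' hne x, fun u hu ↦ not_lt.1 fun hlt ↦ ?_⟩
    have := empCdf.eq_zero_of_lt fun i hi ↦ hlt.trans_le (Finset.inf'_le x (Finset.mem_range.2 hi))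
    exact hα.not_ge (this ▸ hu)
  exact ht.not_ge (csInf_le hbdd hle)

lemma le_empCdf_of_empQuantile_lt {n : ℕ} {x : ℕ → ℝ} {α t : ℝ} (hn : n ≠ 0) (hα : α ≤ 1)
    (ht : empQuantile n x α < t) : α ≤ empCdf n x t := by
  have hne : (Finset.range n).Nonempty := Finset.nonempty_range_iff.2 hn
  have hmem : (Finset.range n).sup' hne x ∈ {u | α ≤ empCdf n x u} := by
    rw [Set.mem_ofPred_eq, empCdf.eq_one_of_le hn fun i hi ↦
      Finset.le_sup' x (Finset.mem_range.2 hi)]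
    exact hα
  obtain ⟨u, hu, hut⟩ := exists_lt_of_csInf_lt ⟨_, hmem⟩ ht
  exact hu.trans (empCdf.monotone hut.le)

lemma empCdf_lt_or_le_of_lt_abs_empQuantile_div_sub {n : ℕ} {x : ℕ → ℝ} {α σ q ε : ℝ}
    (hn : n ≠ 0) (hα : α ∈ Set.Ioc 0 1) (hσ : 0 < σ) (h : ε < |empQuantile n x α / σ - q|) :
    empCdf n x ((q + ε) * σ) < α ∨ α ≤ empCdf n x ((q - ε) * σ) := by
  rcases lt_abs.1 h with h | h
  · exact .inl <| empCdf_lt_of_lt_empQuantile hn hα.1 <| by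
      rw [← lt_div_iff₀ hσ]; linarith
  · exact .inr <| le_empCdf_of_empQuantile_lt hn hα.2 <| by
      rw [← div_lt_iff₀ hσ]; linarith

lemma empCdf_mul_eq {n : ℕ} {x : ℕ → ℝ} {σ : ℝ} (hσ : 0 < σ) (c : ℝ) :
    empCdf n x (c * σ) = (∑ i ∈ Finset.range n, if x i / σ ≤ c then (1 : ℝ) else 0) / n := by
  simp_rw [empCdf, div_le_iff₀ hσ]

lemma Equiv.Perm.exists_apply_zero_apply_one {n i j : ℕ} (hi : i < n) (hj : j < n) (hij : i ≠ j) :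
    ∃ π : Equiv.Perm ℕ, π 0 = i ∧ π 1 = j ∧ ∀ k, n ≤ k → π k = k := by
  set j' := Equiv.swap 0 i j with hj'
  have hj'0 : j' ≠ 0 := fun h ↦ hij <| by
    rw [hj', Equiv.swap_apply_eq_iff, Equiv.swap_apply_left] at h
    exact h.symm
  have hj'n : j' < n := by
    rcases eq_or_ne j 0 with rfl | h
    · rwa [hj', Equiv.swap_apply_left]
    · rwa [hj', Equiv.swap_apply_of_ne_of_ne h hij.symm]
  refine ⟨Equiv.swap 0 i * Equiv.swap 1 j', ?_, ?_, fun k hk ↦ ?_⟩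
  · simp [Equiv.swap_apply_of_ne_of_ne (show (0 : ℕ) ≠ 1 by omega) hj'0.symm]
  · simp [j']
  · simp [Equiv.swap_apply_of_ne_of_ne (show k ≠ 1 by omega) (show k ≠ j' by omega),
      Equiv.swap_apply_of_ne_of_ne (show k ≠ 0 by omega) (show k ≠ i by omega)]

namespace ProbabilityTheory

variable {Ω β : Type*} [MeasurableSpace Ω] [MeasurableSpace β] {P : Measure Ω}

lemma identDistrib_pair_of_exchangeable {u : ℕ → Ω → β} (hu : ∀ i, Measurable (u i)) {n : ℕ}
    (hexch : ∀ π : Equiv.Perm ℕ, (∀ k, n ≤ k → π k = k) →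
      P.map (fun ω (k : Fin n) ↦ u (π k) ω) = P.map (fun ω (k : Fin n) ↦ u k ω))
    {i j : ℕ} (hi : i < n) (hj : j < n) (hij : i ≠ j) :
    IdentDistrib (fun ω ↦ (u i ω, u j ω)) (fun ω ↦ (u 0 ω, u 1 ω)) P P := by
  obtain ⟨π, hπ0, hπ1, hπn⟩ := Equiv.Perm.exists_apply_zero_apply_one hi hj hij
  let e : (Fin n → β) → β × β := fun v ↦ (v ⟨0, by omega⟩, v ⟨1, by omega⟩)
  have he : Measurable e := (measurable_pi_apply _).prodMk (measurable_pi_apply _)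
  refine ⟨by fun_prop, by fun_prop, ?_⟩
  have := congrArg (Measure.map e) (hexch π hπn)
  rw [Measure.map_map he (by fun_prop), Measure.map_map he (by fun_prop)] at this
  simpa [e, Function.comp_def, hπ0, hπ1] using this

lemma identDistrib_of_exchangeable {u : ℕ → Ω → β} (hu : ∀ i, Measurable (u i)) {n : ℕ}
    (hexch : ∀ π : Equiv.Perm ℕ, (∀ k, n ≤ k → π k = k) →
      P.map (fun ω (k : Fin n) ↦ u (π k) ω) = P.map (fun ω (k : Fin n) ↦ u k ω))
    {i : ℕ} (hi : i < n) : IdentDistrib (u i) (u 0) P P := by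
  rcases eq_or_ne i 0 with rfl | hi0
  · exact .refl (hu 0).aemeasurable
  · exact (identDistrib_pair_of_exchangeable hu hexch hi (by omega) hi0).comp measurable_fst

lemma IdentDistrib.covariance_eq {Ω' : Type*} [MeasurableSpace Ω'] {P' : Measure Ω'}
    {X Y : Ω → ℝ} {X' Y' : Ω' → ℝ}
    (h : IdentDistrib (fun ω ↦ (X ω, Y ω)) (fun ω ↦ (X' ω, Y' ω)) P P') :
    cov[X, Y; P] = cov[X', Y'; P'] := by
  have hP := covariance_map_fun (X := Prod.fst) (Y := Prod.snd) (μ := P)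
    measurable_fst.aestronglyMeasurable measurable_snd.aestronglyMeasurable h.aemeasurable_fst
  have hP' := covariance_map_fun (X := Prod.fst) (Y := Prod.snd) (μ := P')
    measurable_fst.aestronglyMeasurable measurable_snd.aestronglyMeasurable h.aemeasurable_snd
  rw [← h.map_eq] at hP'
  exact hP.symm.trans hP'

lemma integral_ite_le_one {X : Ω → ℝ} (hX : Measurable X) (c : ℝ) :
    P[fun ω ↦ if X ω ≤ c then (1 : ℝ) else 0] = P.real {ω | X ω ≤ c} := by
  rw [← integral_indicator_one (measurableSet_le hX measurable_const)]
  rfl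

section Probability

variable [IsProbabilityMeasure P]

lemma variance_sum_range_of_covariance_eq {X : ℕ → Ω → ℝ} {n : ℕ}
    (hX : ∀ i < n, MemLp (X i) 2 P) {v c : ℝ} (hvar : ∀ i < n, Var[X i; P] = v)
    (hcov : ∀ i < n, ∀ j < n, i ≠ j → cov[X i, X j; P] = c) :
    Var[fun ω ↦ ∑ i ∈ Finset.range n, X i ω; P] = n * v + n * (n - 1) * c := by
  rw [variance_fun_sum' fun i hi ↦ hX i (Finset.mem_range.1 hi)]
  have hrow : ∀ i ∈ Finset.range n, ∑ j ∈ Finset.range n, cov[X i, X j; P] = v + (n - 1) * c := by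
    intro i hi
    rw [Finset.mem_range] at hi
    have hentry : ∀ j ∈ Finset.range n, cov[X i, X j; P] = c + if i = j then v - c else 0 := by
      intro j hj
      split_ifs with hij
      · rw [← hij, covariance_self (hX i hi).aemeasurable, hvar i hi]; ring
      · rw [hcov i hi j (Finset.mem_range.1 hj) hij, add_zero]
    rw [Finset.sum_congr rfl hentry, Finset.sum_add_distrib, Finset.sum_ite_eq,
      if_pos (Finset.mem_range.2 hi)]
    simp only [Finset.sum_const, Finset.card_range, nsmul_eq_mul]
    ring
  rw [Finset.sum_congr rfl hrow, Finset.sum_const, Finset.card_range, nsmul_eq_mul]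
  ring

theorem tendsto_measureReal_abs_mean_sub_ge {X : ℕ → ℕ → Ω → ℝ}
    (hX : ∀ n, ∀ i < n, MemLp (X n i) 2 P) {m v c : ℕ → ℝ} {V : ℝ}
    (hmean : ∀ n, ∀ i < n, P[X n i] = m n) (hvar : ∀ n, ∀ i < n, Var[X n i; P] = v n)
    (hV : ∀ n, v n ≤ V) (hcov : ∀ n, ∀ i < n, ∀ j < n, i ≠ j → cov[X n i, X n j; P] = c n)
    (hc : Tendsto c atTop (𝓝 0)) {δ : ℝ} (hδ : 0 < δ) :
    Tendsto (fun n ↦ P.real {ω | δ ≤ |(∑ i ∈ Finset.range n, X n i ω) / n - m n|})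
      atTop (𝓝 0) := by
  have hbound : ∀ n ≠ 0, P.real {ω | δ ≤ |(∑ i ∈ Finset.range n, X n i ω) / n - m n|}
      ≤ (V / n + |c n|) / δ ^ 2 := by
    intro n hn
    have hn' : (0 : ℝ) < n := by positivity
    set S : Ω → ℝ := fun ω ↦ (∑ i ∈ Finset.range n, X n i ω) / n
    have hS : MemLp S 2 P := by
      simpa only [S, div_eq_mul_inv] using
        (memLp_finsetSum _ fun i hi ↦ hX n i (Finset.mem_range.1 hi)).mul_const (n : ℝ)⁻¹
    have hES : P[S] = m n := by
      rw [integral_div, integral_finsetSum _ fun i hi ↦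
        (hX n i (Finset.mem_range.1 hi)).integrable one_le_two,
        Finset.sum_congr rfl fun i hi ↦ hmean n i (Finset.mem_range.1 hi)]
      field_simp
      simp
    have hVS : Var[S; P] ≤ V / n + |c n| := calc
      Var[S; P] = v n / n + (n - 1) / n * c n := by
        rw [show S = fun ω ↦ (∑ i ∈ Finset.range n, X n i ω) * (n : ℝ)⁻¹ by rfl,
          variance_mul_const, variance_sum_range_of_covariance_eq (hX n) (hvar n) (hcov n)]
        field_simp
      _ ≤ V / n + |c n| := by
        gcongr
        · exact hV n
        · have hn1 : (1 : ℝ) ≤ n := Nat.one_le_cast.2 (Nat.one_le_iff_ne_zero.2 hn)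
          calc (n - 1) / n * c n ≤ (n - 1) / n * |c n| :=
                mul_le_mul_of_nonneg_left (le_abs_self _) (by positivity)
            _ ≤ |c n| := mul_le_of_le_one_left (abs_nonneg _) ((div_le_one hn').2 (by linarith))
    have hcheb := meas_ge_le_variance_div_sq hS hδ
    rw [hES] at hcheb
    exact (ENNReal.toReal_le_of_le_ofReal
      (div_nonneg (variance_nonneg _ _) (by positivity)) hcheb).trans (by gcongr)
  have hlim : Tendsto (fun n : ℕ ↦ (V / n + |c n|) / δ ^ 2) atTop (𝓝 0) := by
    simpa using ((tendsto_const_div_atTop_nhds_zero_nat V).add hc.abs).div_const (δ ^ 2)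
  exact squeeze_zero' (.of_forall fun _ ↦ measureReal_nonneg)
    ((eventually_ne_atTop 0).mono hbound) hlim

theorem tendsto_measureReal_abs_mean_comp_sub_ge_of_exchangeable {u : ℕ → ℕ → Ω → β}
    (hu : ∀ n i, Measurable (u n i))
    (hexch : ∀ n, ∀ π : Equiv.Perm ℕ, (∀ k, n ≤ k → π k = k) →
      P.map (fun ω (k : Fin n) ↦ u n (π k) ω) = P.map (fun ω (k : Fin n) ↦ u n k ω))
    {g : β → ℝ} (hg : Measurable g) {C : ℝ} (hgC : ∀ x, |g x| ≤ C)
    (hcov : Tendsto (fun n ↦ cov[fun ω ↦ g (u n 0 ω), fun ω ↦ g (u n 1 ω); P]) atTop (𝓝 0))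
    {δ : ℝ} (hδ : 0 < δ) :
    Tendsto (fun n ↦ P.real {ω | δ ≤ |(∑ i ∈ Finset.range n, g (u n i ω)) / n -
      P[fun ω ↦ g (u n 0 ω)]|}) atTop (𝓝 0) := by
  have hlaw : ∀ n, ∀ i < n, IdentDistrib (fun ω ↦ g (u n i ω)) (fun ω ↦ g (u n 0 ω)) P P :=
    fun n i hi ↦ (identDistrib_of_exchangeable (hu n) (hexch n) hi).comp hg
  refine tendsto_measureReal_abs_mean_sub_ge (V := C ^ 2)
    (fun n i _ ↦ .of_bound (hg.comp (hu n i)).aestronglyMeasurable C (ae_of_all _ fun ω ↦ hgC _))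
    (fun n i hi ↦ (hlaw n i hi).integral_eq) (fun n i hi ↦ (hlaw n i hi).variance_eq)
    (fun n ↦ ?_) (fun n i hi j hj hij ↦ ?_) hcov hδ
  · refine (variance_le_sq_of_bounded (a := -C) (b := C)
      (ae_of_all _ fun ω ↦ abs_le.1 (hgC (u n 0 ω))) (hg.comp (hu n 0)).aemeasurable).trans_eq ?_
    ring
  · exact IdentDistrib.covariance_eq
      ((identDistrib_pair_of_exchangeable (hu n) (hexch n) hi hj hij).comp (hg.prodMap hg))

lemma covariance_ite_lt_ite_lt {X Y : Ω → ℝ} (hX : Measurable X) (hY : Measurable Y)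
    (c : ℝ) :
    cov[fun ω ↦ if c < X ω then (1 : ℝ) else 0, fun ω ↦ if c < Y ω then (1 : ℝ) else 0; P] =
      cov[fun ω ↦ if X ω ≤ c then (1 : ℝ) else 0, fun ω ↦ if Y ω ≤ c then (1 : ℝ) else 0; P] := by
  have hcompl : ∀ x : ℝ, (if c < x then (1 : ℝ) else 0) = 1 - if x ≤ c then 1 else 0 := by
    intro x
    split_ifs <;> linarith
  have hint : ∀ {Z : Ω → ℝ}, Measurable Z →
      Integrable (fun ω ↦ if Z ω ≤ c then (1 : ℝ) else 0) P :=
    fun hZ ↦ .mono' (integrable_const 1)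
      (Measurable.ite (measurableSet_le hZ measurable_const) measurable_const
        measurable_const).aestronglyMeasurable (.of_forall fun ω ↦ by split_ifs <;> simp)
  simp_rw [hcompl]
  rw [covariance_const_sub_left (hint hX), covariance_const_sub_right (hint hY), neg_neg]

theorem tendsto_measureReal_abs_empCdf_sub_ge {u : ℕ → ℕ → Ω → ℝ}
    (hu : ∀ n i, Measurable (u n i))
    (hexch : ∀ n, ∀ π : Equiv.Perm ℕ, (∀ k, n ≤ k → π k = k) →
      P.map (fun ω (k : Fin n) ↦ u n (π k) ω) = P.map (fun ω (k : Fin n) ↦ u n k ω))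
    {σ : ℝ} (hσ : 0 < σ) (c : ℝ)
    (hcov : Tendsto (fun n ↦ cov[fun ω ↦ if u n 0 ω / σ ≤ c then (1 : ℝ) else 0,
      fun ω ↦ if u n 1 ω / σ ≤ c then (1 : ℝ) else 0; P]) atTop (𝓝 0))
    {δ : ℝ} (hδ : 0 < δ) :
    Tendsto (fun n ↦ P.real {ω | δ ≤ |empCdf n (fun i ↦ u n i ω) (c * σ) -
      P.real {ω | u n 0 ω / σ ≤ c}|}) atTop (𝓝 0) := by
  have hg : Measurable fun x : ℝ ↦ if x / σ ≤ c then (1 : ℝ) else 0 :=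
    Measurable.ite (measurableSet_le (measurable_id.div_const σ) measurable_const)
      measurable_const measurable_const
  have hgC : ∀ x : ℝ, |if x / σ ≤ c then (1 : ℝ) else 0| ≤ 1 := fun x ↦ by split_ifs <;> simp
  simpa only [empCdf_mul_eq hσ, integral_ite_le_one ((hu _ 0).div_const σ)] using
    tendsto_measureReal_abs_mean_comp_sub_ge_of_exchangeable hu hexch hg hgC
      hcov hδ

end Probability

end ProbabilityTheory

theorem stmt8_general
    {Ω : Type*} [MeasurableSpace Ω] (P : Measure Ω) [IsProbabilityMeasure P]
    (σ : ℝ) (hσ : 0 < σ) (α : ℝ) (hα : α ∈ Set.Ioo (0 : ℝ) 1)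
    (F : ℝ → ℝ) (hFmono : StrictMono F)
    (qα : ℝ) (hq : F qα = α)
    (u' : (n : ℕ) → ℕ → Ω → ℝ) (hmeas : ∀ n i, Measurable (u' n i))
    -- exchangeability of (u' n 0, …, u' n (n-1)) for each n
    (hexch : ∀ n, ∀ π : Equiv.Perm ℕ, (∀ i, n ≤ i → π i = i) →
      Measure.map (fun ω => (fun i : Fin n => u' n (π i) ω)) P =
        Measure.map (fun ω => (fun i : Fin n => u' n i ω)) P)
    -- (a) convergence of one-dimensional marginals at qα ± ε
    (ha : ∀ ε > (0 : ℝ),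
      Tendsto (fun n => (P {ω | u' n 0 ω / σ ≤ qα + ε}).toReal) atTop (𝓝 (F (qα + ε))) ∧
      Tendsto (fun n => (P {ω | u' n 0 ω / σ ≤ qα - ε}).toReal) atTop (𝓝 (F (qα - ε))))
    -- (b) vanishing pairwise indicator covariances
    (hb : ∀ ε > (0 : ℝ),
      Tendsto (fun n =>
        ∫ ω, ((if qα + ε < u' n 0 ω / σ then (1:ℝ) else 0) -
                ∫ ω', (if qα + ε < u' n 0 ω' / σ then (1:ℝ) else 0) ∂P) *
             ((if qα + ε < u' n 1 ω / σ then (1:ℝ) else 0) -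
                ∫ ω', (if qα + ε < u' n 1 ω' / σ then (1:ℝ) else 0) ∂P) ∂P)
        atTop (𝓝 0) ∧
      Tendsto (fun n =>
        ∫ ω, ((if u' n 0 ω / σ ≤ qα - ε then (1:ℝ) else 0) -
                ∫ ω', (if u' n 0 ω' / σ ≤ qα - ε then (1:ℝ) else 0) ∂P) *
             ((if u' n 1 ω / σ ≤ qα - ε then (1:ℝ) else 0) -
                ∫ ω', (if u' n 1 ω' / σ ≤ qα - ε then (1:ℝ) else 0) ∂P) ∂P)
        atTop (𝓝 0)) :
    ∀ ε > (0 : ℝ),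
      Tendsto (fun n =>
        (P {ω | ε < |empQuantile n (fun i => u' n i ω) α / σ - qα|}).toReal)
        atTop (𝓝 0) := by
  intro ε hε
  have hgapUp : α < F (qα + ε) := hq ▸ hFmono (by linarith)
  have hgapLo : F (qα - ε) < α := hq ▸ hFmono (by linarith)
  set δUp := (F (qα + ε) - α) / 2 with hδUp
  set δLo := (α - F (qα - ε)) / 2 with hδLo
  have hcovUp : Tendsto (fun n ↦ cov[fun ω ↦ if u' n 0 ω / σ ≤ qα + ε then (1 : ℝ) else 0,
      fun ω ↦ if u' n 1 ω / σ ≤ qα + ε then (1 : ℝ) else 0; P]) atTop (𝓝 0) :=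
    (hb ε hε).1.congr fun n ↦
      covariance_ite_lt_ite_lt ((hmeas n 0).div_const σ) ((hmeas n 1).div_const σ) _
  have hlawUp := tendsto_measureReal_abs_empCdf_sub_ge hmeas hexch hσ (qα + ε) hcovUp
    (by linarith : 0 < δUp)
  have hlawLo := tendsto_measureReal_abs_empCdf_sub_ge hmeas hexch hσ (qα - ε) (hb ε hε).2
    (by linarith : 0 < δLo)
  refine squeeze_zero' (.of_forall fun _ ↦ ENNReal.toReal_nonneg) ?_
    (by simpa using hlawUp.add hlawLo)
  filter_upwards [(ha ε hε).1.eventually_const_le (by linarith : α + δUp < F (qα + ε)),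
    (ha ε hε).2.eventually_le_const (by linarith : F (qα - ε) < α - δLo),
    eventually_ne_atTop 0] with n hnUp hnLo hn
  refine (measureReal_mono fun ω hω ↦ ?_).trans (measureReal_union_le _ _)
  rcases empCdf_lt_or_le_of_lt_abs_empQuantile_div_sub hn ⟨hα.1, hα.2.le⟩ hσ hω with h | h
  · left
    rw [Set.mem_ofPred_eq, le_abs, measureReal_def]
    right; linarith
  · right
    rw [Set.mem_ofPred_eq, le_abs, measureReal_def]
    left; linarith

/-- consistency of the empirical quantile of a triangular array of exchangeable
random variables, given convergence of the one-dimensional marginals near the population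
quantile and vanishing pairwise indicator covariances. -/
theorem stmt8
    {Ω : Type*} [MeasurableSpace Ω] (P : Measure Ω) [IsProbabilityMeasure P]
    (σ : ℝ) (hσ : 0 < σ) (α : ℝ) (hα : α ∈ Set.Ioo (0 : ℝ) 1)
    (F : ℝ → ℝ) (hFcont : Continuous F) (hFmono : StrictMono F)
    (qα : ℝ) (hq : F qα = α)
    (u' : (n : ℕ) → ℕ → Ω → ℝ) (hmeas : ∀ n i, Measurable (u' n i))
    -- exchangeability of (u' n 0, …, u' n (n-1)) for each n
    (hexch : ∀ n, ∀ π : Equiv.Perm ℕ, (∀ i, n ≤ i → π i = i) →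
      Measure.map (fun ω => (fun i : Fin n => u' n (π i) ω)) P =
        Measure.map (fun ω => (fun i : Fin n => u' n i ω)) P)
    -- (a) convergence of one-dimensional marginals at qα ± ε
    (ha : ∀ ε > (0 : ℝ),
      Tendsto (fun n => (P {ω | u' n 0 ω / σ ≤ qα + ε}).toReal) atTop (𝓝 (F (qα + ε))) ∧
      Tendsto (fun n => (P {ω | u' n 0 ω / σ ≤ qα - ε}).toReal) atTop (𝓝 (F (qα - ε))))
    -- (b) vanishing pairwise indicator covariances
    (hb : ∀ ε > (0 : ℝ),
      Tendsto (fun n =>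
        ∫ ω, ((if qα + ε < u' n 0 ω / σ then (1:ℝ) else 0) -
                ∫ ω', (if qα + ε < u' n 0 ω' / σ then (1:ℝ) else 0) ∂P) *
             ((if qα + ε < u' n 1 ω / σ then (1:ℝ) else 0) -
                ∫ ω', (if qα + ε < u' n 1 ω' / σ then (1:ℝ) else 0) ∂P) ∂P)
        atTop (𝓝 0) ∧
      Tendsto (fun n =>
        ∫ ω, ((if u' n 0 ω / σ ≤ qα - ε then (1:ℝ) else 0) -
                ∫ ω', (if u' n 0 ω' / σ ≤ qα - ε then (1:ℝ) else 0) ∂P) *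
             ((if u' n 1 ω / σ ≤ qα - ε then (1:ℝ) else 0) -
                ∫ ω', (if u' n 1 ω' / σ ≤ qα - ε then (1:ℝ) else 0) ∂P) ∂P)
        atTop (𝓝 0)) :
    ∀ ε > (0 : ℝ),
      Tendsto (fun n =>
        (P {ω | ε < |empQuantile n (fun i => u' n i ω) α / σ - qα|}).toReal)
        atTop (𝓝 0) :=
  stmt8_general P σ hσ α hα F hFmono qα hq u' hmeas hexch ha hb
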